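/- arXiv:math/0002224 — 3 statements merged into one kernel-verified Lean document; each statement's English description precedes it below -/
import Mathlib

section
/- Let k ≥ 1 and let Ψ : ℝ^k → ℝ^k be a map that is differentiable at 0 with Ψ(0) = 0. Suppose there exists a sequence (x_n) of points of ℝ^k with x_n ≠ 0 for all n, Ψ(x_n) = x_n for all n, and x_n → 0. Then the differential (dΨ)_0 has 1 as an eigenvalue, i.e. there exists a nonzero vector v ∈ ℝ^k with (dΨ)_0(v) = v. -/
open Filter

/-- Lemma 2 of the paper: a map of `ℝ^k`, differentiable at `0`, fixing `0`, with a
sequence of nonzero fixed points converging to `0`, has `1` as an eigenvalue of its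
differential at `0`. -/
theorem eigenvalue_one_of_fixed_points
    (k : ℕ) (hk : 1 ≤ k)
    (Ψ : EuclideanSpace ℝ (Fin k) → EuclideanSpace ℝ (Fin k))
    (hΨ : DifferentiableAt ℝ Ψ 0) (hΨ0 : Ψ 0 = 0)
    (x : ℕ → EuclideanSpace ℝ (Fin k))
    (hx0 : ∀ n, x n ≠ 0)
    (hfix : ∀ n, Ψ (x n) = x n)
    (hlim : Tendsto x atTop (nhds 0)) :
    ∃ v : EuclideanSpace ℝ (Fin k), v ≠ 0 ∧ fderiv ℝ Ψ 0 v = v := by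
  set f := fderiv ℝ Ψ 0 with hf
  have hderiv := hΨ.hasFDerivAt
  rw [hasFDerivAt_iff_tendsto] at hderiv
  -- compose with x
  have h1 : Tendsto (fun n => ‖x n - 0‖⁻¹ * ‖Ψ (x n) - Ψ 0 - f (x n - 0)‖)
      atTop (nhds 0) := hderiv.comp hlim
  simp only [sub_zero, hΨ0, hfix] at h1
  -- normalized sequence
  set u : ℕ → EuclideanSpace ℝ (Fin k) := fun n => ‖x n‖⁻¹ • x n with hu
  have hun : ∀ n, u n ∈ Metric.sphere (0 : EuclideanSpace ℝ (Fin k)) 1 := by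
    intro n
    simp [hu, norm_smul, abs_of_nonneg (inv_nonneg.2 (norm_nonneg _)),
      inv_mul_cancel₀ (norm_ne_zero_iff.2 (hx0 n))]
  have h2 : Tendsto (fun n => u n - f (u n)) atTop (nhds 0) := by
    have : ∀ n, ‖u n - f (u n)‖ = ‖x n‖⁻¹ * ‖x n - f (x n)‖ := by
      intro n
      rw [hu]
      simp only [map_smul, ← smul_sub, norm_smul, Real.norm_eq_abs,
        abs_of_nonneg (inv_nonneg.2 (norm_nonneg (x n)))]
    rw [tendsto_zero_iff_norm_tendsto_zero]
    simpa only [this] using h1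
  -- compactness of the sphere
  obtain ⟨v, hv, φ, hφ, hconv⟩ := (isCompact_sphere (0 : EuclideanSpace ℝ (Fin k)) 1
    ).tendsto_subseq hun
  refine ⟨v, ?_, ?_⟩
  · intro h
    rw [h] at hv
    simp at hv
  · have hfc : Tendsto (fun n => f (u (φ n))) atTop (nhds (f v)) :=
      (f.continuous.tendsto v).comp hconv
    have h3 : Tendsto (fun n => u (φ n) - f (u (φ n))) atTop (nhds (v - f v)) :=
      hconv.sub hfc
    have h4 : Tendsto (fun n => u (φ n) - f (u (φ n))) atTop (nhds 0) :=
      h2.comp hφ.tendsto_atTop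
    have := tendsto_nhds_unique h3 h4
    have hvf : v - f v = 0 := this
    linear_combination (norm := abel) -hvf
end

section
/- Let k, m ≥ 1 and let g : ℝ^k → ℝ^m be a map that is differentiable at 0 with g(0) = 0. Suppose there exists a sequence (x_n) of points of ℝ^k with x_n ≠ 0 for all n, g(x_n) = 0 for all n, and x_n → 0. Then the kernel of the differential (dg)_0 is non-trivial, i.e. there exists a nonzero vector v ∈ ℝ^k with (dg)_0(v) = 0. -/
open Filter

/-- Key step in Lemma 2 of the paper: a map `ℝ^k → ℝ^m`, differentiable at `0`,
vanishing at `0`, with a sequence of nonzero zeros converging to `0`, has a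
non-trivial kernel of its differential at `0`. -/
theorem kernel_nontrivial_of_zeros
    (k m : ℕ) (hk : 1 ≤ k) (hm : 1 ≤ m)
    (g : EuclideanSpace ℝ (Fin k) → EuclideanSpace ℝ (Fin m))
    (hg : DifferentiableAt ℝ g 0) (hg0 : g 0 = 0)
    (x : ℕ → EuclideanSpace ℝ (Fin k))
    (hx0 : ∀ n, x n ≠ 0)
    (hzero : ∀ n, g (x n) = 0)
    (hlim : Tendsto x atTop (nhds 0)) :
    ∃ v : EuclideanSpace ℝ (Fin k), v ≠ 0 ∧ fderiv ℝ g 0 v = 0 := by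
  set f := fderiv ℝ g 0 with hf
  have hder := hg.hasFDerivAt
  rw [hasFDerivAt_iff_tendsto] at hder
  have hderseq := hder.comp hlim
  set u : ℕ → EuclideanSpace ℝ (Fin k) := fun n => ‖x n‖⁻¹ • x n with hu
  have hmem : ∀ n, u n ∈ Metric.sphere (0 : EuclideanSpace ℝ (Fin k)) 1 := by
    intro n
    simp [hu, norm_smul, inv_mul_cancel₀ (norm_ne_zero_iff.mpr (hx0 n))]
  obtain ⟨v, hv, φ, hφ, hvlim⟩ :=
    (isCompact_sphere (0 : EuclideanSpace ℝ (Fin k)) 1).tendsto_subseq hmem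
  refine ⟨v, ?_, ?_⟩
  · intro h
    rw [h, Metric.mem_sphere, dist_zero_left, norm_zero] at hv
    norm_num at hv
  · -- f (u n) → 0
    have key : Tendsto (fun n => ‖f (u n)‖) atTop (nhds 0) := by
      have : ∀ n, ‖f (u n)‖ = ‖x n - 0‖⁻¹ * ‖g (x n) - g 0 - f (x n - 0)‖ := by
        intro n
        simp only [sub_zero, hzero, hg0, zero_sub, norm_neg, hu, map_smul,
          norm_smul, norm_inv, norm_norm]
      simp only [this]
      exact hderseq
    have key' : Tendsto (fun n => ‖f (u (φ n))‖) atTop (nhds 0) :=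
      key.comp hφ.tendsto_atTop
    have hcont : Tendsto (fun n => f (u (φ n))) atTop (nhds (f v)) :=
      (f.continuous.tendsto v).comp hvlim
    have : Tendsto (fun n => ‖f (u (φ n))‖) atTop (nhds ‖f v‖) :=
      (continuous_norm.tendsto _).comp hcont
    have := tendsto_nhds_unique this key'
    exact norm_eq_zero.mp this
end

section
/- Let (M, μ) be a measure space with μ a finite measure, and let f : M → ℝ be a measurable function with f(x) > 0 for all x, such that both f and f⁻² are μ-integrable. If ∫_M f dμ ≤ μ(M) and ∫_M f⁻² dμ ≤ μ(M), then f = 1 μ-almost everywhere. -/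
open MeasureTheory

/-- Measure-theoretic core of Lemma 1(b) of the paper: if both `∫ f dμ ≤ μ(M)` and
`∫ f⁻² dμ ≤ μ(M)` for a positive function `f`, then `f = 1` a.e. -/
theorem eq_one_of_both_integrals_le
    {M : Type*} [MeasurableSpace M] (μ : Measure M) [IsFiniteMeasure μ]
    (f : M → ℝ) (hf_meas : Measurable f) (hf_pos : ∀ x, 0 < f x)
    (hf_int : Integrable f μ)
    (hf2_int : Integrable (fun x => ((f x) ^ 2)⁻¹) μ)
    (h1 : ∫ x, f x ∂μ ≤ (μ Set.univ).toReal)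
    (h2 : ∫ x, ((f x) ^ 2)⁻¹ ∂μ ≤ (μ Set.univ).toReal) :
    f =ᵐ[μ] fun _ => 1 := by
  set g : M → ℝ := fun x => 2 * f x + ((f x) ^ 2)⁻¹ - 3 with hg
  have hg_int : Integrable g μ := by
    apply Integrable.sub
    · exact (hf_int.const_mul 2).add hf2_int
    · exact integrable_const 3
  have hg_nonneg : ∀ x, 0 ≤ g x := by
    intro x
    have hx := hf_pos x
    have h : (f x) ^ 2 * ((f x) ^ 2)⁻¹ = 1 := by
      field_simp
    simp only [hg]
    nlinarith [sq_nonneg (f x - 1), sq_nonneg (f x), mul_pos hx hx,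
      inv_nonneg.mpr (sq_nonneg (f x)), sq_nonneg (f x * f x - 1)]
  have hg_integral : ∫ x, g x ∂μ ≤ 0 := by
    have : ∫ x, g x ∂μ = 2 * ∫ x, f x ∂μ + ∫ x, ((f x) ^ 2)⁻¹ ∂μ
        - 3 * (μ Set.univ).toReal := by
      have hi : Integrable (fun x => 2 * f x + ((f x) ^ 2)⁻¹) μ :=
        (hf_int.const_mul 2).add hf2_int
      have hi1 : Integrable (fun x => 2 * f x) μ := hf_int.const_mul 2
      rw [hg]
      rw [integral_sub hi (integrable_const 3), integral_add hi1 hf2_int,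
        MeasureTheory.integral_const_mul, integral_const]
      simp [mul_comm, measureReal_def]
    linarith
  have hzero : g =ᵐ[μ] 0 := by
    have h0 : 0 ≤ᵐ[μ] g := Filter.Eventually.of_forall hg_nonneg
    have : ∫ x, g x ∂μ = 0 :=
      le_antisymm hg_integral (integral_nonneg hg_nonneg)
    exact (integral_eq_zero_iff_of_nonneg_ae h0 hg_int).mp this
  filter_upwards [hzero] with x hx
  have hx0 := hf_pos x
  simp only [hg, Pi.zero_apply] at hx
  have h : (f x) ^ 2 * ((f x) ^ 2)⁻¹ = 1 := by field_simp
  have hcube : (f x - 1) ^ 2 * (2 * f x + 1) = 0 := by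
    nlinarith [sq_nonneg (f x)]
  have : f x - 1 = 0 := by
    rcases mul_eq_zero.mp hcube with h' | h'
    · exact pow_eq_zero_iff (n := 2) (by norm_num) |>.mp h'
    · nlinarith
  simpa using sub_eq_zero.mp this
end
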